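/- arXiv:2401.13016 — 2 statements merged into one kernel-verified Lean document; each statement's English description precedes it below -/
import Mathlib

section
/- Let g = g₀ ⊕ g₁ be a non-degenerate filiform Lie superalgebra over ℂ with dim g₀ = n+1 and dim g₁ = m, where (n,m) is one of (2,1), (2,2), (2,3), (2,4). If g is naturally graded, then g is isomorphic to the Lie superalgebra with basis {X₀, X₁, X₂} of g₀ and {Y₁, …, Y_m} of g₁ and law given by [X₀,X₁] = X₂, [X₀,Y_j] = Y_{j+1} for 1 ≤ j ≤ m−1, and (Y₁,Y₁) = X₂. -/
/-- The sign `(-1)^(i·j)` for parities `i j : ZMod 2`, as a complex scalar. -/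
def ssign (i j : ZMod 2) : ℂ := if i = 1 ∧ j = 1 then -1 else 1

/-- A (complex) Lie superalgebra structure on the vector space `V`: a ℤ₂-grading
`g` whose parts are complementary, together with an even bilinear bracket which is
super skew-symmetric and satisfies the super Jacobi identity on homogeneous elements. -/
structure LieSuperAlg (V : Type*) [AddCommGroup V] [Module ℂ V] where
  g : ZMod 2 → Submodule ℂ V
  bk : V →ₗ[ℂ] V →ₗ[ℂ] V
  compl : IsCompl (g 0) (g 1)
  grading : ∀ i j : ZMod 2, ∀ x ∈ g i, ∀ y ∈ g j, bk x y ∈ g (i + j)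
  skew : ∀ i j : ZMod 2, ∀ x ∈ g i, ∀ y ∈ g j, bk x y = -(ssign i j • bk y x)
  jacobi : ∀ i j k : ZMod 2, ∀ x ∈ g i, ∀ y ∈ g j, ∀ z ∈ g k,
    ssign k i • bk x (bk y z) + ssign i j • bk y (bk z x) + ssign j k • bk z (bk x y) = 0

namespace LieSuperAlg

variable {V : Type*} [AddCommGroup V] [Module ℂ V]

/-- The descending sequences `C⁰(g_i) = g_i`, `C^{k+1}(g_i) = [g₀, C^k(g_i)]`. -/
def C (A : LieSuperAlg V) (i : ZMod 2) : ℕ → Submodule ℂ V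
  | 0 => A.g i
  | k + 1 => Submodule.span ℂ {z | ∃ x ∈ A.g 0, ∃ y ∈ C A i k, z = A.bk x y}

/-- The descending central sequence of the whole superalgebra. -/
def DC (A : LieSuperAlg V) : ℕ → Submodule ℂ V
  | 0 => ⊤
  | k + 1 => Submodule.span ℂ {z | ∃ x ∈ DC A k, ∃ y : V, z = A.bk x y}

/-- Nilpotency: the descending central sequence reaches zero. -/
def IsNilpotent (A : LieSuperAlg V) : Prop := ∃ k, A.DC k = ⊥

/-- `A` is filiform with parameters `(n, m)`: it is nilpotent, `dim g₀ = n + 1`,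
`dim g₁ = m`, and the super-nilindex is `(n, m)` (the maximal one). -/
def IsFiliform (A : LieSuperAlg V) (n m : ℕ) : Prop :=
  A.IsNilpotent ∧ Module.finrank ℂ (A.g 0) = n + 1 ∧ Module.finrank ℂ (A.g 1) = m ∧
    A.C 0 (n - 1) ≠ ⊥ ∧ A.C 1 (m - 1) ≠ ⊥ ∧ A.C 0 n = ⊥ ∧ A.C 1 m = ⊥

/-- Non-degeneracy: the bracket does not vanish identically on `g₁ × g₁`. -/
def NonDegenerate (A : LieSuperAlg V) : Prop :=
  ∃ x ∈ A.g 1, ∃ y ∈ A.g 1, A.bk x y ≠ 0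

/-- `A` is naturally graded: there are subspaces `W a i` (`i ≥ 1`, parity `a`), splitting
the filtrations `C` (so that `W a i ≅ C^{i-1}(g_a)/C^i(g_a)` and `g ≅ gr(g)` in the
natural way) and compatible with the bracket (so `gr(g)` is a graded Lie superalgebra,
`[gⁱ, gʲ] ⊆ g^{i+j}`).  For finite-dimensional nilpotent superalgebras this is
equivalent to the textbook definition `g ≅ gr(g)` with `gr(g)` graded. -/
def NaturallyGraded (A : LieSuperAlg V) : Prop :=
  ∃ W : ZMod 2 → ℕ → Submodule ℂ V,
    (∀ a, W a 0 = ⊥) ∧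
    (∀ a k, A.C a k = W a (k + 1) ⊔ A.C a (k + 1)) ∧
    (∀ a k, W a (k + 1) ⊓ A.C a (k + 1) = ⊥) ∧
    (∀ a b : ZMod 2, ∀ i j : ℕ, ∀ x ∈ W a i, ∀ y ∈ W b j, A.bk x y ∈ W (a + b) (i + j))

/-- `X 0, …, X n` and `Y 1, …, Y m` form an adapted basis of the superalgebra:
the `X i` are even, the `Y j` are odd, and together they form a basis of `V`. -/
def IsAdaptedBasis (A : LieSuperAlg V) (n m : ℕ) (X Y : ℕ → V) : Prop :=
  (∀ i, i ≤ n → X i ∈ A.g 0) ∧ (∀ j, 1 ≤ j → j ≤ m → Y j ∈ A.g 1) ∧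
  LinearIndependent ℂ
    (Sum.elim (fun i : Fin (n + 1) => X i.val) (fun j : Fin m => Y (j.val + 1))) ∧
  Submodule.span ℂ
    (Set.range (Sum.elim (fun i : Fin (n + 1) => X i.val) (fun j : Fin m => Y (j.val + 1)))) = ⊤

end LieSuperAlg

/-- The law `L^{2,m} + φ₁₂`: `[X₀,X₁] = X₂`, `[X₀,Y_j] = Y_{j+1}` for
`1 ≤ j ≤ m-1`, `(Y₁,Y₁) = X₂`, all other products of basis elements being zero
(the `[Y,X]` products are determined by super skew-symmetry). -/
def LawL2m {V : Type*} [AddCommGroup V] [Module ℂ V] (A : LieSuperAlg V) (m : ℕ) : Prop :=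
  ∃ X Y : ℕ → V, A.IsAdaptedBasis 2 m X Y ∧
    (∀ i j : ℕ, i ≤ 2 → j ≤ 2 → A.bk (X i) (X j) =
      if i = 0 ∧ j = 1 then X 2 else if i = 1 ∧ j = 0 then -X 2 else 0) ∧
    (∀ i j : ℕ, i ≤ 2 → 1 ≤ j → j ≤ m → A.bk (X i) (Y j) =
      if i = 0 ∧ j + 1 ≤ m then Y (j + 1) else 0) ∧
    (∀ i j : ℕ, 1 ≤ i → i ≤ m → 1 ≤ j → j ≤ m → A.bk (Y i) (Y j) =
      if i = 1 ∧ j = 1 then X 2 else 0)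

/-!
Fix subspaces `W a i` realising the natural grading. As `C²(g₀) = 0`, `g₀ = W 0 1 ⊕ W 0 2` and
each level `W a (k + 2)` is spanned by `[W 0 1, W a (k + 1)]`. Counting dimensions, every odd
level is a line and `W 0 1` is at most a plane. Write `W 1 1 = ℂ u`: non-degeneracy forces
`[u, u] ≠ 0`, and one can choose `e, f` spanning `W 0 1` with `[f, u] = 0` and `[e, f] = [u, u]`.
Since even elements act as derivations, `[u, u]` and then `f` kill the `ad e`-orbit of `u`, so
`W 1 (k + 1) = ℂ (ad e)^k u`, and `e, f, [u, u], u, [e, u], …` is the required basis.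
-/

open Submodule Module Finset

section LinearAlgebra

variable {K V M : Type*} [Field K] [AddCommGroup V] [Module K V] [AddCommGroup M] [Module K M]

theorem Submodule.exists_le_span_pair_of_finrank_le_two (P : Submodule K V)
    [FiniteDimensional K P] (h : finrank K P ≤ 2) : ∃ p ∈ P, ∃ q ∈ P, P ≤ span K {p, q} := by
  rcases Nat.lt_or_ge (finrank K P) 2 with h1 | h2
  · obtain ⟨⟨v, rfl⟩⟩ := (finrank_le_one_iff_isPrincipal P).1 (by omega)
    exact ⟨v, mem_span_singleton_self v, v, mem_span_singleton_self v, by simp⟩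
  · let b := finBasisOfFinrankEq K P (le_antisymm h h2)
    refine ⟨b 0, (b 0).2, b 1, (b 1).2, fun x hx => mem_span_pair.2 ?_⟩
    refine ⟨b.repr ⟨x, hx⟩ 0, b.repr ⟨x, hx⟩ 1, ?_⟩
    have hrep := congrArg Subtype.val (b.sum_repr ⟨x, hx⟩)
    rw [Fin.sum_univ_two] at hrep
    simpa using hrep

theorem exists_span_pair_eq_and_apply_eq_zero (φ : V →ₗ[K] M) {w : M} {p q : V}
    (hp : φ p ∈ K ∙ w) (hq : φ q ∈ K ∙ w) : ∃ e f, span K {e, f} = span K {p, q} ∧ φ f = 0 := by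
  obtain ⟨a, ha⟩ := mem_span_singleton.1 hp
  obtain ⟨b, hb⟩ := mem_span_singleton.1 hq
  by_cases ha0 : a = 0
  · exact ⟨q, p, Set.pair_comm q p ▸ rfl, by rw [← ha, ha0, zero_smul]⟩
  refine ⟨p, a • q - b • p, le_antisymm (span_le.2 ?_) (span_le.2 ?_), ?_⟩
  · rintro x (rfl | rfl)
    · exact subset_span (Set.mem_insert _ _)
    · exact mem_span_pair.2 ⟨-b, a, by module⟩
  · rintro x (rfl | rfl)
    · exact subset_span (Set.mem_insert _ _)
    · refine mem_span_pair.2 ⟨b / a, a⁻¹, ?_⟩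
      match_scalars
      · field_simp
        ring
      · field_simp
  · rw [map_sub, map_smul, map_smul, ← ha, ← hb, smul_smul, smul_smul, mul_comm, sub_self]

end LinearAlgebra

@[simp] lemma ssign_zero_left (j : ZMod 2) : ssign 0 j = 1 := if_neg (by simp)

@[simp] lemma ssign_zero_right (i : ZMod 2) : ssign i 0 = 1 := if_neg (by simp)

@[simp] lemma ssign_one_one : ssign 1 1 = -1 := if_pos ⟨rfl, rfl⟩

lemma ssign_comm (i j : ZMod 2) : ssign i j = ssign j i := by
  simp only [ssign, and_comm]

lemma ssign_mul_self (i j : ZMod 2) : ssign i j * ssign i j = 1 := by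
  unfold ssign
  split_ifs <;> norm_num

namespace LieSuperAlg

variable {V : Type*} [AddCommGroup V] [Module ℂ V] (A : LieSuperAlg V)

lemma bk_mem {i j k : ZMod 2} {x y : V} (hx : x ∈ A.g i) (hy : y ∈ A.g j) (h : i + j = k) :
    A.bk x y ∈ A.g k :=
  h ▸ A.grading i j x hx y hy

lemma bk_skew_of_even_left {j : ZMod 2} {x y : V} (hx : x ∈ A.g 0) (hy : y ∈ A.g j) :
    A.bk x y = -A.bk y x := by
  simpa using A.skew 0 j x hx y hy

lemma bk_skew_of_even_right {i : ZMod 2} {x y : V} (hx : x ∈ A.g i) (hy : y ∈ A.g 0) :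
    A.bk x y = -A.bk y x := by
  simpa using A.skew i 0 x hx y hy

lemma bk_self_of_even {x : V} (hx : x ∈ A.g 0) : A.bk x x = 0 := by
  have h := A.bk_skew_of_even_left hx hx
  rwa [eq_neg_iff_add_eq_zero, ← two_smul ℂ, smul_eq_zero, or_iff_right two_ne_zero] at h

lemma bk_bk_self_of_odd {x : V} (hx : x ∈ A.g 1) : A.bk x (A.bk x x) = 0 := by
  have h := A.jacobi 1 1 1 x hx x hx x hx
  rw [ssign_one_one, neg_one_smul] at h
  have h3 : (3 : ℂ) • A.bk x (A.bk x x) = 0 := by linear_combination (norm := module) -h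
  exact (smul_eq_zero.1 h3).resolve_left three_ne_zero

lemma bk_leibniz_of_even {j k : ZMod 2} {x y z : V} (hx : x ∈ A.g 0) (hy : y ∈ A.g j)
    (hz : z ∈ A.g k) : A.bk x (A.bk y z) = A.bk (A.bk x y) z + A.bk y (A.bk x z) := by
  have h := A.jacobi 0 j k x hx y hy z hz
  have hxy : A.bk x y ∈ A.g j := A.bk_mem hx hy (zero_add j)
  rw [A.bk_skew_of_even_right hz hx, A.skew k j z hz _ hxy, ssign_comm k j, smul_neg,
    smul_smul, ssign_mul_self] at h
  simp only [ssign_zero_left, ssign_zero_right, one_smul, map_neg] at h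
  linear_combination (norm := module) h

lemma iterate_bk_mem {j : ZMod 2} {e u : V} (he : e ∈ A.g 0) (hu : u ∈ A.g j) (k : ℕ) :
    (A.bk e)^[k] u ∈ A.g j := by
  induction k with
  | zero => exact hu
  | succ k ih =>
    rw [Function.iterate_succ_apply']
    exact A.bk_mem he ih (zero_add j)

lemma bk_iterate_eq_zero {j : ZMod 2} {x e u : V} (hx : x ∈ A.g 0) (he : e ∈ A.g 0)
    (hu : u ∈ A.g j) (hxe : ∀ k, A.bk (A.bk x e) ((A.bk e)^[k] u) = 0) (hxu : A.bk x u = 0) :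
    ∀ k, A.bk x ((A.bk e)^[k] u) = 0
  | 0 => hxu
  | k + 1 => by
    rw [Function.iterate_succ_apply', A.bk_leibniz_of_even hx he (A.iterate_bk_mem he hu k), hxe,
      bk_iterate_eq_zero hx he hu hxe hxu k, map_zero, add_zero]

lemma C_succ_eq_map₂ (a : ZMod 2) (k : ℕ) : A.C a (k + 1) = map₂ A.bk (A.g 0) (A.C a k) := by
  rw [map₂_eq_span_image2, C]
  congr 1
  ext z
  simp [Set.mem_image2, eq_comm]

lemma C_antitone (a : ZMod 2) : Antitone (A.C a) := by
  refine antitone_nat_of_succ_le fun k => ?_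
  induction k with
  | zero =>
    exact (A.C_succ_eq_map₂ a 0).le.trans
      (map₂_le.2 fun x hx y hy => A.bk_mem hx hy (zero_add a))
  | succ k ih =>
    exact (A.C_succ_eq_map₂ a (k + 1)).trans_le
      ((map₂_le_map₂_right ih).trans (A.C_succ_eq_map₂ a k).ge)

lemma C_eq_of_succ_eq {a : ZMod 2} {k : ℕ} (h : A.C a (k + 1) = A.C a k) :
    ∀ l, k ≤ l → A.C a l = A.C a k := by
  refine Nat.le_induction rfl fun l _ ih => ?_
  rw [C_succ_eq_map₂, ih, ← C_succ_eq_map₂, h]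

lemma isAdaptedBasis_of_le_span [FiniteDimensional ℂ V] {n m : ℕ} {X Y : ℕ → V}
    (hX : ∀ i, i ≤ n → X i ∈ A.g 0) (hY : ∀ j, 1 ≤ j → j ≤ m → Y j ∈ A.g 1)
    (h0 : finrank ℂ (A.g 0) = n + 1) (h1 : finrank ℂ (A.g 1) = m)
    (hspan0 : A.g 0 ≤ span ℂ
      (Set.range (Sum.elim (fun i : Fin (n + 1) => X i.val) (fun j : Fin m => Y (j.val + 1)))))
    (hspan1 : A.g 1 ≤ span ℂ
      (Set.range (Sum.elim (fun i : Fin (n + 1) => X i.val) (fun j : Fin m => Y (j.val + 1))))) :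
    A.IsAdaptedBasis n m X Y := by
  have htop : ⊤ ≤ span ℂ
      (Set.range (Sum.elim (fun i : Fin (n + 1) => X i.val) (fun j : Fin m => Y (j.val + 1)))) := by
    rw [← A.compl.sup_eq_top]
    exact sup_le hspan0 hspan1
  refine ⟨hX, hY, linearIndependent_of_top_le_span_of_card_eq_finrank htop ?_, eq_top_iff.2 htop⟩
  simp [← finrank_add_eq_of_isCompl A.compl, h0, h1]

structure NaturalGrading where
  W : ZMod 2 → ℕ → Submodule ℂ V
  W_zero : ∀ a, W a 0 = ⊥
  C_eq_sup : ∀ a k, A.C a k = W a (k + 1) ⊔ A.C a (k + 1)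
  inf_C_eq_bot : ∀ a k, W a (k + 1) ⊓ A.C a (k + 1) = ⊥
  bk_mem : ∀ a b i j, ∀ x ∈ W a i, ∀ y ∈ W b j, A.bk x y ∈ W (a + b) (i + j)

lemma NaturallyGraded.nonempty_naturalGrading {A : LieSuperAlg V} (h : A.NaturallyGraded) :
    Nonempty A.NaturalGrading :=
  let ⟨W, h0, h1, h2, h3⟩ := h
  ⟨⟨W, h0, h1, h2, h3⟩⟩

namespace NaturalGrading

variable {A} (G : A.NaturalGrading)

lemma bk_mem_of_eq {a b c : ZMod 2} {i j k : ℕ} {x y : V} (hx : x ∈ G.W a i)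
    (hy : y ∈ G.W b j) (hc : a + b = c) (hk : i + j = k) : A.bk x y ∈ G.W c k :=
  hc ▸ hk ▸ G.bk_mem a b i j x hx y hy

lemma bk_eq_zero_of_W_eq_bot {a b : ZMod 2} {i j : ℕ} {x y : V} (hx : x ∈ G.W a i)
    (hy : y ∈ G.W b j) (h : G.W (a + b) (i + j) = ⊥) : A.bk x y = 0 := by
  simpa [h] using G.bk_mem a b i j x hx y hy

lemma W_succ_le_C (a : ZMod 2) (k : ℕ) : G.W a (k + 1) ≤ A.C a k :=
  G.C_eq_sup a k ▸ le_sup_left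

lemma W_le_g (a : ZMod 2) : ∀ k, G.W a k ≤ A.g a
  | 0 => G.W_zero a ▸ bot_le
  | k + 1 => (G.W_succ_le_C a k).trans (A.C_antitone a k.zero_le)

lemma W_eq_bot_of_C_eq_bot {a : ZMod 2} {N k : ℕ} (hN : A.C a N = ⊥) (hk : N < k) :
    G.W a k = ⊥ := by
  obtain ⟨j, rfl⟩ := Nat.exists_eq_add_of_lt hk
  exact le_bot_iff.1 ((G.W_succ_le_C a _).trans ((A.C_antitone a (by omega)).trans hN.le))

lemma C_le_iSup_W {a : ZMod 2} {N : ℕ} (hN : A.C a N = ⊥) (k : ℕ) : A.C a k ≤ ⨆ i, G.W a i := by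
  by_cases hk : N ≤ k
  · exact ((A.C_antitone a hk).trans hN.le).trans bot_le
  · rw [G.C_eq_sup a k]
    exact sup_le (le_iSup _ _) (C_le_iSup_W hN (k + 1))
termination_by N - k

lemma W_succ_ne_bot {a : ZMod 2} {N k : ℕ} (hN : A.C a N = ⊥) (hk : A.C a k ≠ ⊥) :
    G.W a (k + 1) ≠ ⊥ := by
  intro hW
  have hstab := A.C_eq_of_succ_eq (by rw [G.C_eq_sup a k, hW, bot_sup_eq])
  rcases le_total k N with hkN | hNk
  · exact hk (hstab N hkN ▸ hN)
  · exact hk (le_bot_iff.1 ((A.C_antitone a hNk).trans hN.le))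

lemma g_zero_eq_sup (hC02 : A.C 0 2 = ⊥) : A.g 0 = G.W 0 1 ⊔ G.W 0 2 := by
  rw [← C, G.C_eq_sup 0 0, G.C_eq_sup 0 1, hC02, sup_bot_eq]

lemma W_add_two_le_map₂ (hC02 : A.C 0 2 = ⊥) (a : ZMod 2) (k : ℕ) :
    G.W a (k + 2) ≤ map₂ A.bk (G.W 0 1) (G.W a (k + 1)) := by
  set S := map₂ A.bk (G.W 0 1) (G.W a (k + 1))
  have hS : S ≤ G.W a (k + 2) :=
    map₂_le.2 fun x hx y hy => G.bk_mem_of_eq hx hy (zero_add a) (by omega)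
  have hC : A.C a (k + 1) ≤ S ⊔ A.C a (k + 2) := by
    have hW02 : map₂ A.bk (G.W 0 2) (G.W a (k + 1)) ≤ A.C a (k + 2) :=
      map₂_le.2 fun x hx y hy =>
        G.W_succ_le_C a (k + 2) (G.bk_mem_of_eq hx hy (zero_add a) (by omega))
    have hg0 : map₂ A.bk (A.g 0) (A.C a (k + 1)) ≤ A.C a (k + 2) := (A.C_succ_eq_map₂ a _).ge
    rw [A.C_succ_eq_map₂ a k, G.C_eq_sup a k, map₂_sup_right, G.g_zero_eq_sup hC02,
      map₂_sup_left, ← G.g_zero_eq_sup hC02]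
    exact sup_le (sup_le le_sup_left (le_sup_of_le_right hW02)) (le_sup_of_le_right hg0)
  have := le_inf ((G.W_succ_le_C a (k + 1)).trans hC) le_rfl
  rwa [sup_inf_assoc_of_le _ hS, inf_comm, G.inf_C_eq_bot, sup_bot_eq] at this

lemma W_zero_two_le_span_bk (hC02 : A.C 0 2 = ⊥) {p q : V} (hp : p ∈ A.g 0) (hq : q ∈ A.g 0)
    (hpq : G.W 0 1 ≤ span ℂ {p, q}) : G.W 0 2 ≤ ℂ ∙ A.bk p q := by
  calc G.W 0 2 ≤ map₂ A.bk (G.W 0 1) (G.W 0 1) := G.W_add_two_le_map₂ hC02 0 0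
    _ ≤ map₂ A.bk (span ℂ {p, q}) (span ℂ {p, q}) := map₂_le_map₂ hpq hpq
    _ = span ℂ (Set.image2 (fun x y => A.bk x y) {p, q} {p, q}) := map₂_span_span ..
    _ ≤ ℂ ∙ A.bk p q := by
      refine span_le.2 (Set.image2_subset_iff.2 ?_)
      rintro x (rfl | rfl) y (rfl | rfl)
      · simp [A.bk_self_of_even hp]
      · exact mem_span_singleton_self _
      · exact A.bk_skew_of_even_left hq hp ▸ neg_mem (mem_span_singleton_self _)
      · simp [A.bk_self_of_even hq]

lemma iterate_bk_mem_W {a : ZMod 2} {e u : V} (he : e ∈ G.W 0 1) (hu : u ∈ G.W a 1) (k : ℕ) :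
    (A.bk e)^[k] u ∈ G.W a (k + 1) := by
  induction k with
  | zero => exact hu
  | succ k ih =>
    rw [Function.iterate_succ_apply']
    exact G.bk_mem_of_eq he ih (zero_add a) (by omega)

lemma W_succ_le_span_iterate (hC02 : A.C 0 2 = ⊥) {a : ZMod 2} {e f u : V}
    (hspan : G.W 0 1 ≤ span ℂ {e, f}) (hu : G.W a 1 = ℂ ∙ u)
    (hfu : ∀ k, A.bk f ((A.bk e)^[k] u) = 0) : ∀ k, G.W a (k + 1) ≤ ℂ ∙ (A.bk e)^[k] u
  | 0 => hu.le
  | k + 1 => by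
    calc G.W a (k + 2) ≤ map₂ A.bk (G.W 0 1) (G.W a (k + 1)) := G.W_add_two_le_map₂ hC02 a k
      _ ≤ map₂ A.bk (span ℂ {e, f}) (ℂ ∙ (A.bk e)^[k] u) :=
        map₂_le_map₂ hspan (W_succ_le_span_iterate hC02 hspan hu hfu k)
      _ = span ℂ {(A.bk e)^[k + 1] u, 0} := by
        rw [map₂_span_span, Set.image2_singleton_right, Set.image_pair, hfu,
          Function.iterate_succ_apply']
      _ ≤ ℂ ∙ (A.bk e)^[k + 1] u := by rw [span_insert, span_zero_singleton, sup_bot_eq]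

lemma bk_self_ne_zero_of_nonDegenerate (hnd : A.NonDegenerate) (hC02 : A.C 0 2 = ⊥) {N : ℕ}
    (hN : A.C 1 N = ⊥) {u : V} (hu : G.W 1 1 = ℂ ∙ u) : A.bk u u ≠ 0 := by
  intro huu
  obtain ⟨x, hx, y, hy, hxy⟩ := hnd
  suffices map₂ A.bk (⨆ i, G.W 1 i) (⨆ j, G.W 1 j) = ⊥ from hxy <| (mem_bot ℂ).1 <|
    this ▸ apply_mem_map₂ _ (G.C_le_iSup_W hN 0 hx) (G.C_le_iSup_W hN 0 hy)
  rw [map₂_iSup_left, iSup_eq_bot]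
  intro i
  rw [map₂_iSup_right, iSup_eq_bot]
  intro j
  rcases Nat.lt_or_ge 2 (i + j) with hij | hij
  · exact eq_bot_iff.2 <| map₂_le.2 fun x hx y hy =>
      (G.bk_eq_zero_of_W_eq_bot hx hy (G.W_eq_bot_of_C_eq_bot hC02 hij)).symm ▸ zero_mem ⊥
  · obtain rfl | rfl | ⟨rfl, rfl⟩ : i = 0 ∨ j = 0 ∨ (i = 1 ∧ j = 1) := by omega
    · rw [G.W_zero, map₂_bot_left]
    · rw [G.W_zero, map₂_bot_right]
    · rw [hu, map₂_span_span, Set.image2_singleton, huu, span_zero_singleton]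

lemma exists_even_generators (hC02 : A.C 0 2 = ⊥) {p q u w : V} (hp : p ∈ G.W 0 1)
    (hq : q ∈ G.W 0 1) (hpq : G.W 0 1 ≤ span ℂ {p, q}) (hu : u ∈ G.W 1 1)
    (hw : G.W 1 2 = ℂ ∙ w) (huu : A.bk u u ≠ 0) :
    ∃ e ∈ G.W 0 1, ∃ f ∈ G.W 0 1, G.W 0 1 ≤ span ℂ {e, f} ∧ A.bk e f = A.bk u u ∧
      A.bk f u = 0 := by
  obtain ⟨e, f, hef, hfu⟩ := exists_span_pair_eq_and_apply_eq_zero (A.bk.flip u)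
    (hw ▸ G.bk_mem 0 1 1 1 p hp u hu) (hw ▸ G.bk_mem 0 1 1 1 q hq u hu)
  have hspan : span ℂ {e, f} ≤ G.W 0 1 := hef ▸ span_le.2 (Set.insert_subset hp (by simpa))
  have he : e ∈ G.W 0 1 := hspan (subset_span (Set.mem_insert _ _))
  have hf : f ∈ G.W 0 1 := hspan (subset_span (Set.mem_insert_of_mem _ rfl))
  obtain ⟨c, hc⟩ := mem_span_singleton.1 <|
    G.W_zero_two_le_span_bk hC02 (G.W_le_g 0 1 he) (G.W_le_g 0 1 hf) (hef ▸ hpq)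
      (G.bk_mem 1 1 1 1 u hu u hu)
  have hc0 : c ≠ 0 := by
    rintro rfl
    exact huu (by rw [← hc, zero_smul])
  refine ⟨e, he, c • f, smul_mem _ c hf, ?_, by rw [map_smul, hc], ?_⟩
  · rwa [span_insert, span_singleton_smul_eq (IsUnit.mk0 c hc0), ← span_insert, hef]
  · rw [map_smul, LinearMap.smul_apply, ← LinearMap.flip_apply, hfu, smul_zero]

section FiniteDimensional

variable [FiniteDimensional ℂ V]

lemma finrank_C_eq_add (a : ZMod 2) (k : ℕ) :
    finrank ℂ (A.C a k) = finrank ℂ (G.W a (k + 1)) + finrank ℂ (A.C a (k + 1)) := by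
  have h := finrank_sup_add_finrank_inf_eq (G.W a (k + 1)) (A.C a (k + 1))
  rwa [G.inf_C_eq_bot, ← G.C_eq_sup, finrank_bot, add_zero] at h

lemma finrank_g_eq_sum_add (a : ZMod 2) (d : ℕ) : finrank ℂ (A.g a) =
    ∑ i ∈ range d, finrank ℂ (G.W a (i + 1)) + finrank ℂ (A.C a d) := by
  induction d with
  | zero => simp only [range_zero, sum_empty, zero_add]; rfl
  | succ d ih => rw [ih, sum_range_succ, G.finrank_C_eq_add a d, add_assoc]

lemma finrank_W_succ_le_one {a : ZMod 2} {N : ℕ} (hN : A.C a N = ⊥) (hne : A.C a (N - 1) ≠ ⊥)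
    (hdim : finrank ℂ (A.g a) ≤ N) (k : ℕ) : finrank ℂ (G.W a (k + 1)) ≤ 1 := by
  rcases lt_or_ge k N with hk | hk
  · have hsum := G.finrank_g_eq_sum_add a N
    rw [hN, finrank_bot, add_zero, ← add_sum_erase _ _ (mem_range.2 hk)] at hsum
    have hpos : ∀ i ∈ (range N).erase k, 1 ≤ finrank ℂ (G.W a (i + 1)) := by
      intro i hi
      have hiN : i ≤ N - 1 := by have := mem_range.1 (mem_of_mem_erase hi); omega
      refine Nat.one_le_iff_ne_zero.2 fun h0 => G.W_succ_ne_bot hN (fun hb => hne ?_)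
        (by simpa using h0)
      exact le_bot_iff.1 (hb ▸ A.C_antitone a hiN)
    have hle := card_nsmul_le_sum _ _ 1 hpos
    rw [card_erase_of_mem (mem_range.2 hk), card_range, smul_eq_mul, mul_one] at hle
    omega
  · rw [G.W_eq_bot_of_C_eq_bot hN (by omega), finrank_bot]
    exact zero_le_one

lemma exists_W_succ_eq_span_singleton {a : ZMod 2} {N : ℕ} (hN : A.C a N = ⊥)
    (hne : A.C a (N - 1) ≠ ⊥) (hdim : finrank ℂ (A.g a) ≤ N) (k : ℕ) :
    ∃ y, G.W a (k + 1) = ℂ ∙ y :=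
  ((finrank_le_one_iff_isPrincipal _).1 (G.finrank_W_succ_le_one hN hne hdim k)).principal

lemma exists_le_span_pair_W_zero_one (hC02 : A.C 0 2 = ⊥) (hC01 : A.C 0 1 ≠ ⊥)
    (hdim : finrank ℂ (A.g 0) ≤ 3) : ∃ p ∈ G.W 0 1, ∃ q ∈ G.W 0 1, G.W 0 1 ≤ span ℂ {p, q} := by
  refine (G.W 0 1).exists_le_span_pair_of_finrank_le_two ?_
  have hsum := G.finrank_g_eq_sum_add 0 2
  rw [hC02, finrank_bot, add_zero, sum_range_succ, sum_range_one] at hsum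
  change finrank ℂ (A.g 0) = finrank ℂ (G.W 0 1) + finrank ℂ (G.W 0 2) at hsum
  have hW02 : finrank ℂ (G.W 0 2) ≠ 0 := fun h => G.W_succ_ne_bot hC02 hC01 (finrank_eq_zero.1 h)
  omega

lemma isAdaptedBasis_of_generators {m : ℕ} (hC02 : A.C 0 2 = ⊥) (hC1 : A.C 1 m = ⊥)
    (h0 : finrank ℂ (A.g 0) = 3) (h1 : finrank ℂ (A.g 1) = m) {e f x u : V} (he : e ∈ G.W 0 1)
    (hf : f ∈ G.W 0 1) (hx : x ∈ G.W 0 2) (hu : u ∈ G.W 1 1) (hspan : G.W 0 1 ≤ span ℂ {e, f})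
    (hW02 : G.W 0 2 ≤ ℂ ∙ x) (hW1 : ∀ k, G.W 1 (k + 1) ≤ ℂ ∙ (A.bk e)^[k] u) :
    A.IsAdaptedBasis 2 m (fun i => [e, f, x].getD i 0) (fun j => (A.bk e)^[j - 1] u) := by
  refine A.isAdaptedBasis_of_le_span ?_ (fun j _ _ => A.iterate_bk_mem (G.W_le_g 0 1 he)
    (G.W_le_g 1 1 hu) _) h0 h1 ?_ ?_
  · intro i hi
    interval_cases i
    exacts [G.W_le_g 0 1 he, G.W_le_g 0 1 hf, G.W_le_g 0 2 hx]
  · rw [G.g_zero_eq_sup hC02]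
    refine sup_le (hspan.trans (span_le.2 ?_)) (hW02.trans (span_le.2 ?_))
    · rintro y (rfl | rfl)
      exacts [subset_span ⟨Sum.inl 0, rfl⟩, subset_span ⟨Sum.inl 1, rfl⟩]
    · rintro y rfl
      exact subset_span ⟨Sum.inl 2, rfl⟩
  · refine (G.C_le_iSup_W hC1 0).trans (iSup_le fun i => ?_)
    rcases i with _ | k
    · exact G.W_zero 1 ▸ bot_le
    rcases lt_or_ge k m with hk | hk
    · refine (hW1 k).trans (span_le.2 fun y hy => subset_span ⟨Sum.inr ⟨k, hk⟩, ?_⟩)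
      simpa using hy.symm
    · exact G.W_eq_bot_of_C_eq_bot (k := k + 1) hC1 (by omega) ▸ bot_le

theorem lawL2m_of_generators {m : ℕ} (hC02 : A.C 0 2 = ⊥) (hC1 : A.C 1 m = ⊥)
    (h0 : finrank ℂ (A.g 0) = 3) (h1 : finrank ℂ (A.g 1) = m) {e f u : V} (he : e ∈ G.W 0 1)
    (hf : f ∈ G.W 0 1) (hspan : G.W 0 1 ≤ span ℂ {e, f}) (hu : G.W 1 1 = ℂ ∙ u)
    (hef : A.bk e f = A.bk u u) (hfu : A.bk f u = 0) : LawL2m A m := by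
  have hu1 : u ∈ G.W 1 1 := hu ▸ mem_span_singleton_self u
  have huu : A.bk u u ∈ G.W 0 2 := G.bk_mem 1 1 1 1 u hu1 u hu1
  have hge := G.W_le_g 0 1 he
  have hgf := G.W_le_g 0 1 hf
  have hgu := G.W_le_g 1 1 hu1
  have hguu := G.W_le_g 0 2 huu
  have hW0 : ∀ {i j : ℕ} {x y : V}, x ∈ G.W 0 i → y ∈ G.W 0 j → 2 < i + j → A.bk x y = 0 :=
    fun hx hy h => G.bk_eq_zero_of_W_eq_bot hx hy (G.W_eq_bot_of_C_eq_bot hC02 h)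
  have hy := G.iterate_bk_mem_W he hu1
  have hUY := A.bk_iterate_eq_zero hguu hge hgu
    (fun k => by rw [hW0 huu he (by norm_num), map_zero, LinearMap.zero_apply])
    (by rw [A.bk_skew_of_even_left hguu hgu, A.bk_bk_self_of_odd hgu, neg_zero])
  have hFY := A.bk_iterate_eq_zero hgf hge hgu
    (fun k => by
      rw [A.bk_skew_of_even_left hgf hge, hef, map_neg, LinearMap.neg_apply, hUY, neg_zero])
    hfu
  refine ⟨_, _, G.isAdaptedBasis_of_generators hC02 hC1 h0 h1 he hf huu hu1 hspan
    (hef ▸ G.W_zero_two_le_span_bk hC02 hge hgf hspan)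
    (G.W_succ_le_span_iterate hC02 hspan hu hFY), ?_, ?_, ?_⟩
  · intro i j hi hj
    interval_cases i <;> interval_cases j <;>
      simp [A.bk_self_of_even, hge, hgf, hguu, hef, A.bk_skew_of_even_left hgf hge,
        hW0 he huu, hW0 hf huu, hW0 huu he, hW0 huu hf]
  · intro i j hi hj hjm
    obtain ⟨k, rfl⟩ := Nat.exists_eq_add_of_le' hj
    simp only [Nat.add_sub_cancel]
    interval_cases i
    · show A.bk e _ = _
      rw [← Function.iterate_succ_apply' (A.bk e)]
      split_ifs with hk
      · rfl
      · exact (mem_bot ℂ).1 (G.W_eq_bot_of_C_eq_bot (k := k + 2) hC1 (by omega) ▸ hy (k + 1))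
    · exact hFY k
    · exact hUY k
  · intro i j hi him hj hjm
    obtain ⟨k, rfl⟩ := Nat.exists_eq_add_of_le' hi
    obtain ⟨l, rfl⟩ := Nat.exists_eq_add_of_le' hj
    simp only [Nat.add_sub_cancel]
    split_ifs with hkl
    · obtain ⟨rfl, rfl⟩ : k = 0 ∧ l = 0 := by omega
      rfl
    · exact G.bk_eq_zero_of_W_eq_bot (hy k) (hy l) (G.W_eq_bot_of_C_eq_bot hC02 (by omega))

end FiniteDimensional

end NaturalGrading

end LieSuperAlg

theorem stmt0_general {V : Type*} [AddCommGroup V] [Module ℂ V] [FiniteDimensional ℂ V] (A : LieSuperAlg V) (m : ℕ)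
    (hfil : A.IsFiliform 2 m) (hnd : A.NonDegenerate) (hng : A.NaturallyGraded) :
    LawL2m A m := by
  obtain ⟨-, h0, h1, hC01, hC1m, hC02, hC1⟩ := hfil
  obtain ⟨G⟩ := hng.nonempty_naturalGrading
  obtain ⟨u, hu⟩ := G.exists_W_succ_eq_span_singleton hC1 hC1m h1.le 0
  obtain ⟨w, hw⟩ := G.exists_W_succ_eq_span_singleton hC1 hC1m h1.le 1
  obtain ⟨p, hp, q, hq, hpq⟩ := G.exists_le_span_pair_W_zero_one hC02 hC01 h0.le
  obtain ⟨e, he, f, hf, hspan, hef, hfu⟩ := G.exists_even_generators hC02 hp hq hpq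
    (hu ▸ mem_span_singleton_self u) hw (G.bk_self_ne_zero_of_nonDegenerate hnd hC02 hC1 hu)
  exact G.lawL2m_of_generators hC02 hC1 h0 h1 he hf hspan hu hef hfu

/-- Every non-degenerate naturally graded filiform Lie superalgebra with
`dim g₀ = 3` and `dim g₁ = m` as indicated is isomorphic to `L^{2,m} + φ₁₂`. -/
theorem stmt0 {V : Type*} [AddCommGroup V] [Module ℂ V] [FiniteDimensional ℂ V] (A : LieSuperAlg V) (m : ℕ)
    (hm : m = 1 ∨ m = 2 ∨ m = 3 ∨ m = 4)
    (hfil : A.IsFiliform 2 m) (hnd : A.NonDegenerate) (hng : A.NaturallyGraded) :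
    LawL2m A m :=
  stmt0_general A m hfil hnd hng
end

section
/- Let g = g₀ ⊕ g₁ be a non-degenerate filiform Lie superalgebra over ℂ with dim g₀ = 4 (i.e. n = 3) and dim g₁ = m ∈ {2,3}. If g is naturally graded, then g is isomorphic to exactly one of the following two non-isomorphic Lie superalgebras on a basis {X₀,X₁,X₂,X₃} ∪ {Y₁,…,Y_m}: (I) [X₀,X_i] = X_{i+1} for 1 ≤ i ≤ 2, [X₀,Y_j] = Y_{j+1} for 1 ≤ j ≤ m−1, (Y₁,Y₁) = X₂, (Y₁,Y₂) = (1/2)X₃; (II) the same law together with the additional brackets [X₁,Y_j] = Y_{j+1} for 1 ≤ j ≤ m−1. -/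
namespace LieSuperAlg

variable {V : Type*} [AddCommGroup V] [Module ℂ V]

/-- Auxiliary: span of all brackets between two subspaces. -/
def Bspan (A : LieSuperAlg V) (s t : Submodule ℂ V) : Submodule ℂ V :=
  Submodule.span ℂ {z | ∃ x ∈ s, ∃ y ∈ t, z = A.bk x y}

lemma C_succ (A : LieSuperAlg V) (a : ZMod 2) (k : ℕ) :
    A.C a (k+1) = A.Bspan (A.g 0) (A.C a k) := rfl

lemma C_zero (A : LieSuperAlg V) (a : ZMod 2) : A.C a 0 = A.g a := rfl

lemma Bspan_le (A : LieSuperAlg V) {s t p : Submodule ℂ V}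
    (h : ∀ x ∈ s, ∀ y ∈ t, A.bk x y ∈ p) : A.Bspan s t ≤ p := by
  apply Submodule.span_le.2; rintro z ⟨x, hx, y, hy, rfl⟩; exact h x hx y hy

lemma bk_mem_Bspan (A : LieSuperAlg V) {s t : Submodule ℂ V} {x y : V}
    (hx : x ∈ s) (hy : y ∈ t) : A.bk x y ∈ A.Bspan s t :=
  Submodule.subset_span ⟨x, hx, y, hy, rfl⟩

lemma Bspan_bot_left (A : LieSuperAlg V) {t p : Submodule ℂ V} : A.Bspan ⊥ t ≤ p := by
  apply A.Bspan_le; intro x hx y hy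
  rw [Submodule.mem_bot] at hx; simp [hx]

lemma Bspan_bot_right (A : LieSuperAlg V) {s p : Submodule ℂ V} : A.Bspan s ⊥ ≤ p := by
  apply A.Bspan_le; intro x hx y hy
  rw [Submodule.mem_bot] at hy; simp [hy]

lemma Bspan_split (A : LieSuperAlg V) {s t p s1 s2 s3 t1 t2 t3 : Submodule ℂ V}
    (hs : s ≤ s1 ⊔ (s2 ⊔ s3)) (ht : t ≤ t1 ⊔ (t2 ⊔ t3))
    (h11 : A.Bspan s1 t1 ≤ p) (h12 : A.Bspan s1 t2 ≤ p) (h13 : A.Bspan s1 t3 ≤ p)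
    (h21 : A.Bspan s2 t1 ≤ p) (h22 : A.Bspan s2 t2 ≤ p) (h23 : A.Bspan s2 t3 ≤ p)
    (h31 : A.Bspan s3 t1 ≤ p) (h32 : A.Bspan s3 t2 ≤ p) (h33 : A.Bspan s3 t3 ≤ p) :
    A.Bspan s t ≤ p := by
  apply A.Bspan_le
  intro x hx y hy
  obtain ⟨x1, hx1, x', hx', rfl⟩ := Submodule.mem_sup.1 (hs hx)
  obtain ⟨x2, hx2, x3, hx3, rfl⟩ := Submodule.mem_sup.1 hx'
  obtain ⟨y1, hy1, y', hy', rfl⟩ := Submodule.mem_sup.1 (ht hy)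
  obtain ⟨y2, hy2, y3, hy3, rfl⟩ := Submodule.mem_sup.1 hy'
  simp only [map_add, LinearMap.add_apply]
  repeat' apply Submodule.add_mem
  all_goals first
    | exact h11 (A.bk_mem_Bspan hx1 hy1)
    | exact h12 (A.bk_mem_Bspan hx1 hy2)
    | exact h13 (A.bk_mem_Bspan hx1 hy3)
    | exact h21 (A.bk_mem_Bspan hx2 hy1)
    | exact h22 (A.bk_mem_Bspan hx2 hy2)
    | exact h23 (A.bk_mem_Bspan hx2 hy3)
    | exact h31 (A.bk_mem_Bspan hx3 hy1)
    | exact h32 (A.bk_mem_Bspan hx3 hy2)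
    | exact h33 (A.bk_mem_Bspan hx3 hy3)

lemma ssign00 : ssign 0 0 = 1 := by simp [ssign]
lemma ssign01 : ssign 0 1 = 1 := by simp [ssign]
lemma ssign10 : ssign 1 0 = 1 := by simp [ssign]
lemma ssign11 : ssign 1 1 = -1 := by simp [ssign]

lemma bk_skew_ee (A : LieSuperAlg V) {x y : V} (hx : x ∈ A.g 0) (hy : y ∈ A.g 0) :
    A.bk y x = - A.bk x y := by
  have := A.skew 0 0 y hy x hx; rw [ssign00, one_smul] at this; exact this

lemma bk_self_even (A : LieSuperAlg V) {x : V} (hx : x ∈ A.g 0) : A.bk x x = 0 := by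
  have h := A.bk_skew_ee hx hx
  have h2 : A.bk x x + A.bk x x = 0 := by
    nth_rewrite 1 [h]; abel
  have h3 : (2 : ℂ) • A.bk x x = 0 := by linear_combination (norm := module) h2
  simpa using smul_eq_zero.1 h3

lemma bk_skew_oe (A : LieSuperAlg V) {x y : V} (hx : x ∈ A.g 0) (hy : y ∈ A.g 1) :
    A.bk y x = - A.bk x y := by
  have := A.skew 1 0 y hy x hx; rw [ssign10, one_smul] at this; exact this

lemma bk_skew_eo (A : LieSuperAlg V) {x y : V} (hx : x ∈ A.g 0) (hy : y ∈ A.g 1) :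
    A.bk x y = - A.bk y x := by
  rw [A.bk_skew_oe hx hy, neg_neg]

lemma bk_symm_oo (A : LieSuperAlg V) {x y : V} (hx : x ∈ A.g 1) (hy : y ∈ A.g 1) :
    A.bk y x = A.bk x y := by
  have := A.skew 1 1 y hy x hx; rw [ssign11] at this
  simpa using this

lemma jac001 (A : LieSuperAlg V) {x y u : V} (hx : x ∈ A.g 0) (hy : y ∈ A.g 0)
    (hu : u ∈ A.g 1) :
    A.bk (A.bk x y) u = A.bk x (A.bk y u) - A.bk y (A.bk x u) := by
  have h := A.jacobi 0 0 1 x hx y hy u hu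
  rw [ssign10, ssign00, ssign01, one_smul, one_smul, one_smul,
      A.bk_skew_oe hx hu] at h
  have h2 : A.bk u (A.bk x y) = - A.bk (A.bk x y) u :=
    A.bk_skew_oe (A.grading 0 0 x hx y hy) hu
  rw [h2, map_neg] at h
  linear_combination (norm := module) -h

lemma jac011 (A : LieSuperAlg V) {x u v : V} (hx : x ∈ A.g 0) (hu : u ∈ A.g 1)
    (hv : v ∈ A.g 1) :
    A.bk x (A.bk u v) = A.bk u (A.bk x v) + A.bk v (A.bk x u) := by
  have h := A.jacobi 0 1 1 x hx u hu v hv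
  rw [ssign10, ssign01, ssign11, one_smul, one_smul, neg_smul, one_smul,
      A.bk_skew_oe hx hv] at h
  rw [map_neg] at h
  linear_combination (norm := module) h

lemma jac111 (A : LieSuperAlg V) {u : V} (hu : u ∈ A.g 1) : A.bk u (A.bk u u) = 0 := by
  have h := A.jacobi 1 1 1 u hu u hu u hu
  rw [ssign11] at h
  have h3 : (3 : ℂ) • A.bk u (A.bk u u) = 0 := by linear_combination (norm := module) -h
  simpa using smul_eq_zero.1 h3

lemma C_bot_succ (A : LieSuperAlg V) {a : ZMod 2} {k : ℕ} (h : A.C a k = ⊥) :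
    A.C a (k+1) = ⊥ := by
  rw [C_succ]
  refine le_bot_iff.1 (A.Bspan_le ?_)
  intro x hx y hy
  rw [h, Submodule.mem_bot] at hy
  simp [hy]

lemma C_bot_of_le (A : LieSuperAlg V) {a : ZMod 2} {N k : ℕ} (h : A.C a N = ⊥)
    (hk : N ≤ k) : A.C a k = ⊥ := by
  induction k with
  | zero => rw [Nat.le_zero.1 hk] at h; exact h
  | succ n ih =>
    rcases Nat.lt_or_ge N (n+1) with h1 | h1
    · exact A.C_bot_succ (ih (by omega))
    · have : N = n + 1 := le_antisymm hk h1
      rwa [← this]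

lemma extract {P Q S : Submodule ℂ V} (hPQ : P ⊓ Q = ⊥) (hSP : S ≤ P) (h : P ≤ S ⊔ Q) :
    P ≤ S := by
  intro w hw
  obtain ⟨s, hs, t, ht, rfl⟩ := Submodule.mem_sup.1 (h hw)
  have htP : t ∈ P := by
    have : s + t - s ∈ P := Submodule.sub_mem _ hw (hSP hs)
    simpa using this
  have : t ∈ P ⊓ Q := ⟨htP, ht⟩
  rw [hPQ] at this
  simp only [Submodule.mem_bot] at this
  simpa [this] using hs

lemma span_singleton_of_finrank_one [FiniteDimensional ℂ V] {S : Submodule ℂ V}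
    (h : Module.finrank ℂ S = 1) : ∃ v, v ∈ S ∧ v ≠ 0 ∧ Submodule.span ℂ {v} = S := by
  have hS : S ≠ ⊥ := by
    intro hb; rw [hb] at h; simp at h
  obtain ⟨v, hv, hvne⟩ := Submodule.exists_mem_ne_zero_of_ne_bot hS
  refine ⟨v, hv, hvne, ?_⟩
  refine Submodule.eq_of_le_of_finrank_le ((Submodule.span_singleton_le_iff_mem _ _).2 hv) ?_
  rw [h, finrank_span_singleton hvne]

end LieSuperAlg



/-- The law `L^{3,m} + φ₁₂`. -/
def Law3mI {V : Type*} [AddCommGroup V] [Module ℂ V] (A : LieSuperAlg V) (m : ℕ) : Prop :=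
  ∃ X Y : ℕ → V, A.IsAdaptedBasis 3 m X Y ∧
    (∀ i j : ℕ, i ≤ 3 → j ≤ 3 → A.bk (X i) (X j) =
      if i = 0 ∧ 1 ≤ j ∧ j ≤ 2 then X (j + 1)
      else if j = 0 ∧ 1 ≤ i ∧ i ≤ 2 then -X (i + 1) else 0) ∧
    (∀ i j : ℕ, i ≤ 3 → 1 ≤ j → j ≤ m → A.bk (X i) (Y j) =
      if i = 0 ∧ j + 1 ≤ m then Y (j + 1) else 0) ∧
    (∀ i j : ℕ, 1 ≤ i → i ≤ m → 1 ≤ j → j ≤ m → A.bk (Y i) (Y j) =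
      if i = 1 ∧ j = 1 then X 2
      else if (i = 1 ∧ j = 2) ∨ (i = 2 ∧ j = 1) then (1/2 : ℂ) • X 3 else 0)

/-- The law `L^{3,m} + φ₁₂ + Ψ²₁₁` (additionally `[X₁,Y_j] = Y_{j+1}`). -/
def Law3mII {V : Type*} [AddCommGroup V] [Module ℂ V] (A : LieSuperAlg V) (m : ℕ) : Prop :=
  ∃ X Y : ℕ → V, A.IsAdaptedBasis 3 m X Y ∧
    (∀ i j : ℕ, i ≤ 3 → j ≤ 3 → A.bk (X i) (X j) =
      if i = 0 ∧ 1 ≤ j ∧ j ≤ 2 then X (j + 1)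
      else if j = 0 ∧ 1 ≤ i ∧ i ≤ 2 then -X (i + 1) else 0) ∧
    (∀ i j : ℕ, i ≤ 3 → 1 ≤ j → j ≤ m → A.bk (X i) (Y j) =
      if (i = 0 ∨ i = 1) ∧ j + 1 ≤ m then Y (j + 1) else 0) ∧
    (∀ i j : ℕ, 1 ≤ i → i ≤ m → 1 ≤ j → j ≤ m → A.bk (Y i) (Y j) =
      if i = 1 ∧ j = 1 then X 2
      else if (i = 1 ∧ j = 2) ∨ (i = 2 ∧ j = 1) then (1/2 : ℂ) • X 3 else 0)

open LieSuperAlg in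
lemma notII {V : Type*} [AddCommGroup V] [Module ℂ V] (A : LieSuperAlg V) (m : ℕ)
    (hm2 : 2 ≤ m) : ¬ Law3mII A m := by
  rintro ⟨X, Y, ⟨hX, hY, hli, -⟩, hXX, hXY, hYY⟩
  have hX1 : X 1 ∈ A.g 0 := hX 1 (by norm_num)
  have hY1 : Y 1 ∈ A.g 1 := hY 1 le_rfl (by omega)
  have e1 : A.bk (X 1) (Y 1) = Y 2 := by
    have h := hXY 1 1 (by norm_num) le_rfl (by omega)
    simpa [hm2] using h
  have e2 : A.bk (Y 1) (Y 1) = X 2 := by simpa using hYY 1 1 le_rfl (by omega) le_rfl (by omega)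
  have e3 : A.bk (X 1) (X 2) = 0 := by simpa using hXX 1 2 (by norm_num) (by norm_num)
  have e4 : A.bk (Y 1) (Y 2) = (1/2 : ℂ) • X 3 := by
    simpa using hYY 1 2 le_rfl (by omega) (by norm_num) hm2
  have hj := A.jac011 hX1 hY1 hY1
  rw [e2, e3, e1, e4] at hj
  have hX3 : X 3 = 0 := by
    have h1 : (1:ℂ) • X 3 = 0 := by linear_combination (norm := module) -hj
    simpa using h1
  have hne := hli.ne_zero (Sum.inl (⟨3, by norm_num⟩ : Fin 4))
  simp only [Sum.elim_inl] at hne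
  exact hne hX3

open LieSuperAlg in
lemma main {V : Type*} [AddCommGroup V] [Module ℂ V] [FiniteDimensional ℂ V]
    (A : LieSuperAlg V) (m : ℕ) (hm : m = 2 ∨ m = 3)
    (hfil : A.IsFiliform 3 m) (hnd : A.NonDegenerate) (hng : A.NaturallyGraded) :
    Law3mI A m := by
  have hm2 : 2 ≤ m := by rcases hm with rfl | rfl <;> norm_num
  have hm3 : m ≤ 3 := by rcases hm with rfl | rfl <;> norm_num
  obtain ⟨-, hr0, hr1, hC02ne', hC1ne, hC03, hC1m⟩ := hfil
  have hC02ne : A.C 0 2 ≠ ⊥ := by simpa using hC02ne'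
  obtain ⟨W, hW0, hWC, hWdisj, hWbk⟩ := hng
  have p00 : (0 : ZMod 2) + 0 = 0 := by decide
  have p01 : (0 : ZMod 2) + 1 = 1 := by decide
  have p11 : (1 : ZMod 2) + 1 = 0 := by decide
  -- chain facts, even part
  have hC02 : A.C 0 2 = W 0 3 := by rw [hWC 0 2, hC03, sup_bot_eq]
  have hC01 : A.C 0 1 = W 0 2 ⊔ W 0 3 := by rw [hWC 0 1, hC02]
  have hG0 : A.g 0 = W 0 1 ⊔ (W 0 2 ⊔ W 0 3) := by
    conv_lhs => rw [← A.C_zero 0, hWC 0 0, hC01]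
  have hW0bot : ∀ k, 4 ≤ k → W 0 k = ⊥ := by
    intro k hk
    have h := hWC 0 (k - 1)
    rw [A.C_bot_of_le hC03 (by omega)] at h
    have hk1 : k - 1 + 1 = k := by omega
    rw [hk1] at h
    exact le_bot_iff.1 (le_sup_left.trans h.ge)
  -- chain facts, odd part
  have hW1bot : ∀ k, m + 1 ≤ k → W 1 k = ⊥ := by
    intro k hk
    have h := hWC 1 (k - 1)
    rw [A.C_bot_of_le hC1m (by omega)] at h
    have hk1 : k - 1 + 1 = k := by omega
    rw [hk1] at h
    exact le_bot_iff.1 (le_sup_left.trans h.ge)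
  have hC12 : A.C 1 2 = W 1 3 := by
    rcases hm with rfl | rfl
    · rw [A.C_bot_of_le hC1m (by norm_num), hW1bot 3 (by norm_num)]
    · rw [hWC 1 2, hC1m, sup_bot_eq]
  have hC11 : A.C 1 1 = W 1 2 ⊔ W 1 3 := by rw [hWC 1 1, hC12]
  have hG1 : A.g 1 = W 1 1 ⊔ (W 1 2 ⊔ W 1 3) := by
    conv_lhs => rw [← A.C_zero 1, hWC 1 0, hC11]
  -- memberships in g
  have hW01g : W 0 1 ≤ A.g 0 := by rw [hG0]; exact le_sup_left
  have hW02g : W 0 2 ≤ A.g 0 := by rw [hG0]; exact le_sup_of_le_right le_sup_left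
  have hW03g : W 0 3 ≤ A.g 0 := by rw [hG0]; exact le_sup_of_le_right le_sup_right
  have hW11g : W 1 1 ≤ A.g 1 := by rw [hG1]; exact le_sup_left
  have hW12g : W 1 2 ≤ A.g 1 := by rw [hG1]; exact le_sup_of_le_right le_sup_left
  have hW13g : W 1 3 ≤ A.g 1 := by rw [hG1]; exact le_sup_of_le_right le_sup_right
  -- bracket bounds
  have bw : ∀ (a b c : ZMod 2) (i j k : ℕ), a + b = c → i + j = k →
      A.Bspan (W a i) (W b j) ≤ W c k := by
    intro a b c i j k h hk
    apply A.Bspan_le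
    intro x hx y hy
    rw [← h, ← hk]
    exact hWbk a b i j x hx y hy
  have bw0bot : ∀ (a b : ZMod 2) (i j : ℕ) (p : Submodule ℂ V), a + b = 0 → 4 ≤ i + j →
      A.Bspan (W a i) (W b j) ≤ p := by
    intro a b i j p hab hij
    refine (bw a b 0 i j (i+j) hab rfl).trans ?_
    rw [hW0bot _ hij]; exact bot_le
  have bw1bot : ∀ (a b : ZMod 2) (i j : ℕ) (p : Submodule ℂ V), a + b = 1 → m + 1 ≤ i + j →
      A.Bspan (W a i) (W b j) ≤ p := by
    intro a b i j p hab hij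
    refine (bw a b 1 i j (i+j) hab rfl).trans ?_
    rw [hW1bot _ hij]; exact bot_le
  -- zero brackets from vanishing weights
  have zb0 : ∀ (a b : ZMod 2) (i j : ℕ) (x y : V), a + b = 0 → 4 ≤ i + j →
      x ∈ W a i → y ∈ W b j → A.bk x y = 0 := by
    intro a b i j x y hab hij hx hy
    have h := hWbk a b i j x hx y hy
    rw [hab, hW0bot _ hij] at h
    simpa using h
  have zb1 : ∀ (a b : ZMod 2) (i j : ℕ) (x y : V), a + b = 1 → m + 1 ≤ i + j →
      x ∈ W a i → y ∈ W b j → A.bk x y = 0 := by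
    intro a b i j x y hab hij hx hy
    have h := hWbk a b i j x hx y hy
    rw [hab, hW1bot _ hij] at h
    simpa using h
  -- generation facts
  have hBW02 : W 0 2 = A.Bspan (W 0 1) (W 0 1) := by
    have hSle : A.Bspan (W 0 1) (W 0 1) ≤ W 0 2 := bw 0 0 0 1 1 2 p00 rfl
    have hC01le : A.C 0 1 ≤ A.Bspan (W 0 1) (W 0 1) ⊔ W 0 3 := by
      rw [A.C_succ, A.C_zero, hG0]
      refine A.Bspan_split le_rfl le_rfl le_sup_left
        ((bw 0 0 0 1 2 3 p00 rfl).trans le_sup_right)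
        (bw0bot 0 0 1 3 _ p00 (by norm_num))
        ((bw 0 0 0 2 1 3 p00 rfl).trans le_sup_right)
        (bw0bot 0 0 2 2 _ p00 (by norm_num))
        (bw0bot 0 0 2 3 _ p00 (by norm_num))
        (bw0bot 0 0 3 1 _ p00 (by norm_num))
        (bw0bot 0 0 3 2 _ p00 (by norm_num))
        (bw0bot 0 0 3 3 _ p00 (by norm_num))
    have hd : W 0 2 ⊓ W 0 3 = ⊥ := by have := hWdisj 0 1; rwa [hC02] at this
    refine le_antisymm (extract hd hSle (le_trans ?_ hC01le)) hSle
    rw [hC01] at hC01le ⊢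
    exact le_sup_left
  have hBW03 : W 0 3 = A.Bspan (W 0 1) (W 0 2) := by
    have hSle : A.Bspan (W 0 1) (W 0 2) ≤ W 0 3 := bw 0 0 0 1 2 3 p00 rfl
    have hC02le : A.C 0 2 ≤ A.Bspan (W 0 1) (W 0 2) := by
      rw [A.C_succ, hC01, hG0]
      refine A.Bspan_split le_rfl (sup_le_sup_left le_sup_left _) le_rfl
        (bw0bot 0 0 1 3 _ p00 (by norm_num)) A.Bspan_bot_right
        (bw0bot 0 0 2 2 _ p00 (by norm_num))
        (bw0bot 0 0 2 3 _ p00 (by norm_num)) A.Bspan_bot_right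
        (bw0bot 0 0 3 2 _ p00 (by norm_num))
        (bw0bot 0 0 3 3 _ p00 (by norm_num)) A.Bspan_bot_right
    rw [hC02] at hC02le
    exact le_antisymm hC02le hSle
  have hBW12 : W 1 2 = A.Bspan (W 0 1) (W 1 1) := by
    have hSle : A.Bspan (W 0 1) (W 1 1) ≤ W 1 2 := bw 0 1 1 1 1 2 p01 rfl
    have hC11le : A.C 1 1 ≤ A.Bspan (W 0 1) (W 1 1) ⊔ W 1 3 := by
      rw [A.C_succ, A.C_zero, hG0, hG1]
      refine A.Bspan_split le_rfl le_rfl le_sup_left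
        ((bw 0 1 1 1 2 3 p01 rfl).trans le_sup_right)
        (bw1bot 0 1 1 3 _ p01 (by omega))
        ((bw 0 1 1 2 1 3 p01 rfl).trans le_sup_right)
        (bw1bot 0 1 2 2 _ p01 (by omega))
        (bw1bot 0 1 2 3 _ p01 (by omega))
        (bw1bot 0 1 3 1 _ p01 (by omega))
        (bw1bot 0 1 3 2 _ p01 (by omega))
        (bw1bot 0 1 3 3 _ p01 (by omega))
    have hd : W 1 2 ⊓ W 1 3 = ⊥ := by have := hWdisj 1 1; rwa [hC12] at this
    refine le_antisymm (extract hd hSle (le_trans ?_ hC11le)) hSle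
    rw [hC11]
    exact le_sup_left
  have hBW13 : W 1 3 = A.Bspan (W 0 1) (W 1 2) := by
    have hSle : A.Bspan (W 0 1) (W 1 2) ≤ W 1 3 := bw 0 1 1 1 2 3 p01 rfl
    have hC12le : A.C 1 2 ≤ A.Bspan (W 0 1) (W 1 2) := by
      rw [A.C_succ, hC11, hG0]
      refine A.Bspan_split le_rfl (sup_le_sup_left le_sup_left _) le_rfl
        (bw1bot 0 1 1 3 _ p01 (by omega)) A.Bspan_bot_right
        (bw1bot 0 1 2 2 _ p01 (by omega))
        (bw1bot 0 1 2 3 _ p01 (by omega)) A.Bspan_bot_right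
        (bw1bot 0 1 3 2 _ p01 (by omega))
        (bw1bot 0 1 3 3 _ p01 (by omega)) A.Bspan_bot_right
    rw [hC12] at hC12le
    exact le_antisymm hC12le hSle
  -- rank bookkeeping, even part
  have frsum0 : Module.finrank ℂ (W 0 1) + (Module.finrank ℂ (W 0 2) + Module.finrank ℂ (W 0 3)) = 4 := by
    have e0 := Submodule.finrank_sup_add_finrank_inf_eq (W 0 1) (A.C 0 1)
    rw [hWdisj 0 0] at e0
    have h00 := hWC 0 0
    rw [A.C_zero] at h00
    rw [← h00, hr0] at e0
    have e1 := Submodule.finrank_sup_add_finrank_inf_eq (W 0 2) (A.C 0 2)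
    rw [hWdisj 0 1, ← hWC 0 1] at e1
    have e2 : Module.finrank ℂ (A.C 0 2) = Module.finrank ℂ (W 0 3) := by rw [hC02]
    simp only [finrank_bot, add_zero] at e0 e1
    omega
  have frW03ne : W 0 3 ≠ ⊥ := by rw [← hC02]; exact hC02ne
  have frW02ne : W 0 2 ≠ ⊥ := by
    intro h
    apply frW03ne
    refine le_bot_iff.1 ?_
    rw [hBW03, h]
    exact A.Bspan_bot_right
  have frW01ne : W 0 1 ≠ ⊥ := by
    intro h
    apply frW02ne
    refine le_bot_iff.1 ?_
    rw [hBW02, h]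
    exact A.Bspan_bot_left
  have frW01ne1 : Module.finrank ℂ (W 0 1) ≠ 1 := by
    intro h1
    obtain ⟨v, hv, hvne, hvspan⟩ := span_singleton_of_finrank_one h1
    apply frW02ne
    refine le_bot_iff.1 ?_
    rw [hBW02]
    refine A.Bspan_le ?_
    intro x hx y hy
    rw [← hvspan, Submodule.mem_span_singleton] at hx hy
    obtain ⟨a, rfl⟩ := hx; obtain ⟨b, rfl⟩ := hy
    simp [map_smul, A.bk_self_even (hW01g hv)]
  have hfrW01 : Module.finrank ℂ (W 0 1) = 2 := by
    have a2 : Module.finrank ℂ (W 0 2) ≠ 0 := fun h => frW02ne (Submodule.finrank_eq_zero.1 h)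
    have a3 : Module.finrank ℂ (W 0 3) ≠ 0 := fun h => frW03ne (Submodule.finrank_eq_zero.1 h)
    have a1 : Module.finrank ℂ (W 0 1) ≠ 0 := fun h => frW01ne (Submodule.finrank_eq_zero.1 h)
    omega
  have hfrW02 : Module.finrank ℂ (W 0 2) = 1 := by
    have a2 : Module.finrank ℂ (W 0 2) ≠ 0 := fun h => frW02ne (Submodule.finrank_eq_zero.1 h)
    have a3 : Module.finrank ℂ (W 0 3) ≠ 0 := fun h => frW03ne (Submodule.finrank_eq_zero.1 h)
    omega
  have hfrW03 : Module.finrank ℂ (W 0 3) = 1 := by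
    have a2 : Module.finrank ℂ (W 0 2) ≠ 0 := fun h => frW02ne (Submodule.finrank_eq_zero.1 h)
    have a3 : Module.finrank ℂ (W 0 3) ≠ 0 := fun h => frW03ne (Submodule.finrank_eq_zero.1 h)
    omega
  -- rank bookkeeping, odd part
  have frsum1 : Module.finrank ℂ (W 1 1) + (Module.finrank ℂ (W 1 2) + Module.finrank ℂ (W 1 3)) = m := by
    have e0 := Submodule.finrank_sup_add_finrank_inf_eq (W 1 1) (A.C 1 1)
    rw [hWdisj 1 0] at e0
    have h00 := hWC 1 0
    rw [A.C_zero] at h00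
    rw [← h00, hr1] at e0
    have e1 := Submodule.finrank_sup_add_finrank_inf_eq (W 1 2) (A.C 1 2)
    rw [hWdisj 1 1, ← hWC 1 1] at e1
    have e2 : Module.finrank ℂ (A.C 1 2) = Module.finrank ℂ (W 1 3) := by rw [hC12]
    simp only [finrank_bot, add_zero] at e0 e1
    omega
  have frW12ne : W 1 2 ≠ ⊥ := by
    rcases hm with rfl | rfl
    · intro h
      apply hC1ne
      norm_num
      rw [hC11, h, hW1bot 3 (by norm_num)]
      simp
    · intro h
      apply hC1ne
      norm_num
      rw [hC12, ← le_bot_iff, hBW13, h]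
      exact A.Bspan_bot_right
  have frW11ne : W 1 1 ≠ ⊥ := by
    intro h
    apply frW12ne
    refine le_bot_iff.1 ?_
    rw [hBW12, h]
    exact A.Bspan_bot_right
  have hfrW11 : Module.finrank ℂ (W 1 1) = 1 := by
    have a1 : Module.finrank ℂ (W 1 1) ≠ 0 := fun h => frW11ne (Submodule.finrank_eq_zero.1 h)
    have a2 : Module.finrank ℂ (W 1 2) ≠ 0 := fun h => frW12ne (Submodule.finrank_eq_zero.1 h)
    rcases hm with rfl | rfl
    · have a3 : Module.finrank ℂ (W 1 3) = 0 :=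
        Submodule.finrank_eq_zero.2 (hW1bot 3 (by norm_num))
      omega
    · have a3 : Module.finrank ℂ (W 1 3) ≠ 0 := by
        intro h
        apply hC1ne
        norm_num
        rw [hC12]
        exact Submodule.finrank_eq_zero.1 h
      omega
  have hfrW12 : Module.finrank ℂ (W 1 2) = 1 := by
    have a1 : Module.finrank ℂ (W 1 1) ≠ 0 := fun h => frW11ne (Submodule.finrank_eq_zero.1 h)
    have a2 : Module.finrank ℂ (W 1 2) ≠ 0 := fun h => frW12ne (Submodule.finrank_eq_zero.1 h)
    rcases hm with rfl | rfl
    · have a3 : Module.finrank ℂ (W 1 3) = 0 :=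
        Submodule.finrank_eq_zero.2 (hW1bot 3 (by norm_num))
      omega
    · have a3 : Module.finrank ℂ (W 1 3) ≠ 0 := by
        intro h
        apply hC1ne
        norm_num
        rw [hC12]
        exact Submodule.finrank_eq_zero.1 h
      omega
  -- choose odd basis vectors
  obtain ⟨y₁, hy₁W, hy₁ne, hy₁span⟩ := span_singleton_of_finrank_one hfrW11
  obtain ⟨y₂, hy₂W, hy₂ne, hy₂span⟩ := span_singleton_of_finrank_one hfrW12
  have hy₁g : y₁ ∈ A.g 1 := hW11g hy₁W
  have hy₂g : y₂ ∈ A.g 1 := hW12g hy₂W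
  obtain ⟨y₃, hy₃W, hy₃span⟩ : ∃ v, v ∈ W 1 3 ∧ Submodule.span ℂ {v} = W 1 3 := by
    rcases hm with rfl | rfl
    · exact ⟨0, Submodule.zero_mem _,
        by rw [Submodule.span_zero_singleton, hW1bot 3 (by norm_num)]⟩
    · have hfrW13 : Module.finrank ℂ (W 1 3) = 1 := by omega
      obtain ⟨v, hv, _, hs⟩ := span_singleton_of_finrank_one hfrW13
      exact ⟨v, hv, hs⟩
  have hy₃g : y₃ ∈ A.g 1 := hW13g hy₃W
  have hG1span : A.g 1 = Submodule.span ℂ {y₁, y₂, y₃} := by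
    rw [hG1, ← hy₁span, ← hy₂span, ← hy₃span,
      show ({y₁, y₂, y₃} : Set V) = {y₁} ∪ ({y₂} ∪ {y₃}) by
        rw [Set.insert_eq, Set.insert_eq],
      Submodule.span_union, Submodule.span_union]
  -- choose X₀ with [X₀, y₁] = y₂
  have hexX : ∃ x ∈ W 0 1, A.bk x y₁ ≠ 0 := by
    by_contra hcon
    push_neg at hcon
    apply frW12ne
    refine le_bot_iff.1 ?_
    rw [hBW12]
    refine A.Bspan_le ?_
    intro x hx y hy
    rw [← hy₁span, Submodule.mem_span_singleton] at hy
    obtain ⟨a, rfl⟩ := hy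
    rw [map_smul, hcon x hx, smul_zero]
    exact Submodule.zero_mem _
  obtain ⟨x₀, hx₀W, hx₀ne⟩ := hexX
  obtain ⟨d, hd⟩ : ∃ d : ℂ, d • y₂ = A.bk x₀ y₁ := by
    rw [← Submodule.mem_span_singleton, hy₂span]
    have := hWbk 0 1 1 1 x₀ hx₀W y₁ hy₁W
    rwa [p01] at this
  have hdne : d ≠ 0 := by rintro rfl; rw [zero_smul] at hd; exact hx₀ne hd.symm
  set X₀ := d⁻¹ • x₀ with hX₀def
  have hX₀W : X₀ ∈ W 0 1 := Submodule.smul_mem _ _ hx₀W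
  have hX₀g : X₀ ∈ A.g 0 := hW01g hX₀W
  have hbkX₀y₁ : A.bk X₀ y₁ = y₂ := by
    rw [hX₀def, map_smul, LinearMap.smul_apply, ← hd, smul_smul,
      inv_mul_cancel₀ hdne, one_smul]
  -- choose x₁ ≠ 0 in W 0 1 with [x₁, y₁] = 0
  obtain ⟨x₁, hx₁W, hx₁ne, hbkx₁y₁⟩ : ∃ x₁, x₁ ∈ W 0 1 ∧ x₁ ≠ 0 ∧ A.bk x₁ y₁ = 0 := by
    set ψ : (W 0 1) →ₗ[ℂ] V := (A.bk.flip y₁).comp (W 0 1).subtype with hψ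
    have hrange : LinearMap.range ψ ≤ W 1 2 := by
      rintro - ⟨x, rfl⟩
      have := hWbk 0 1 1 1 (x : V) x.2 y₁ hy₁W
      rwa [p01] at this
    have hrk : Module.finrank ℂ (LinearMap.range ψ) ≤ 1 := by
      have := Submodule.finrank_mono hrange
      omega
    have hker := LinearMap.finrank_range_add_finrank_ker ψ
    rw [hfrW01] at hker
    have hkne : LinearMap.ker ψ ≠ ⊥ := by
      intro h
      rw [h] at hker
      simp only [finrank_bot, add_zero] at hker
      omega
    obtain ⟨u, hu, hune⟩ := Submodule.exists_mem_ne_zero_of_ne_bot hkne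
    refine ⟨(u : V), u.2, by simpa using hune, ?_⟩
    have := LinearMap.mem_ker.1 hu
    simpa [hψ] using this
  have hx₁g : x₁ ∈ A.g 0 := hW01g hx₁W
  -- W 0 1 = span {X₀, x₁}
  have hli2 : LinearIndependent ℂ ![X₀, x₁] := by
    rw [linearIndependent_fin2]
    refine ⟨by simpa using hx₁ne, ?_⟩
    intro a ha
    simp only [Matrix.cons_val_one, Matrix.head_cons, Matrix.cons_val_zero] at ha
    apply hy₂ne
    rw [← hbkX₀y₁, ← ha, map_smul, LinearMap.smul_apply, hbkx₁y₁, smul_zero]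
  have hrange2 : Set.range ![X₀, x₁] = {X₀, x₁} := by
    simp [Set.pair_comm]
  have hW01span : W 0 1 = Submodule.span ℂ {X₀, x₁} := by
    have heq : Submodule.span ℂ (Set.range ![X₀, x₁]) = W 0 1 := by
      apply Submodule.eq_of_le_of_finrank_le
      · rw [Submodule.span_le, hrange2]
        rintro z hz
        simp only [Set.mem_insert_iff, Set.mem_singleton_iff] at hz
        rcases hz with rfl | rfl
        · exact hX₀W
        · exact hx₁W
      · rw [hfrW01, finrank_span_eq_card hli2]
        simp
    rw [← heq, hrange2]
  -- X₂ := [y₁, y₁]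
  set X₂ := A.bk y₁ y₁ with hX₂def
  have hX₂W : X₂ ∈ W 0 2 := by
    have := hWbk 1 1 1 1 y₁ hy₁W y₁ hy₁W; rwa [p11] at this
  have hX₂g : X₂ ∈ A.g 0 := hW02g hX₂W
  have hbky₁X₂ : A.bk y₁ X₂ = 0 := A.jac111 hy₁g
  have hbkX₂y₁ : A.bk X₂ y₁ = 0 := by
    rw [A.bk_skew_eo hX₂g hy₁g, hbky₁X₂, neg_zero]
  have hX₂ne : X₂ ≠ 0 := by
    intro hz
    have hb12 : A.bk y₁ y₂ = 0 := by
      have hj := A.jac011 hX₀g hy₁g hy₁g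
      rw [← hX₂def, hz, map_zero, hbkX₀y₁] at hj
      have h2 : (2:ℂ) • A.bk y₁ y₂ = 0 := by linear_combination (norm := module) -hj
      simpa using smul_eq_zero.1 h2
    have hgen : ∀ a ∈ ({y₁, y₂, y₃} : Set V), ∀ b ∈ ({y₁, y₂, y₃} : Set V), A.bk a b = 0 := by
      have z11 : A.bk y₁ y₁ = 0 := by rw [← hX₂def]; exact hz
      have z21 : A.bk y₂ y₁ = 0 := by rw [A.bk_symm_oo hy₁g hy₂g]; exact hb12
      have z13 : A.bk y₁ y₃ = 0 := zb0 1 1 1 3 _ _ p11 (by norm_num) hy₁W hy₃W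
      have z31 : A.bk y₃ y₁ = 0 := zb0 1 1 3 1 _ _ p11 (by norm_num) hy₃W hy₁W
      have z22 : A.bk y₂ y₂ = 0 := zb0 1 1 2 2 _ _ p11 (by norm_num) hy₂W hy₂W
      have z23 : A.bk y₂ y₃ = 0 := zb0 1 1 2 3 _ _ p11 (by norm_num) hy₂W hy₃W
      have z32 : A.bk y₃ y₂ = 0 := zb0 1 1 3 2 _ _ p11 (by norm_num) hy₃W hy₂W
      have z33 : A.bk y₃ y₃ = 0 := zb0 1 1 3 3 _ _ p11 (by norm_num) hy₃W hy₃W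
      rintro a (rfl | rfl | rfl) b (rfl | rfl | rfl) <;> assumption
    obtain ⟨u, hu, w, hw, hbk⟩ := hnd
    rw [hG1span] at hu hw
    apply hbk
    clear hbk
    revert w
    induction hu using Submodule.span_induction with
    | mem x hx =>
      intro w hw
      induction hw using Submodule.span_induction with
      | mem y hy => exact hgen x hx y hy
      | zero => simp
      | add y z _ _ h1 h2 => rw [map_add, h1, h2, add_zero]
      | smul a y _ h1 => rw [map_smul, h1, smul_zero]
    | zero => intro w hw; simp
    | add u v _ _ h1 h2 =>
      intro w hw
      rw [map_add, LinearMap.add_apply, h1 w hw, h2 w hw, add_zero]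
    | smul a u _ h1 =>
      intro w hw
      rw [map_smul, LinearMap.smul_apply, h1 w hw, smul_zero]
  have hspanX₂ : Submodule.span ℂ {X₂} = W 0 2 :=
    Submodule.eq_of_le_of_finrank_le ((Submodule.span_singleton_le_iff_mem _ _).2 hX₂W)
      (by rw [hfrW02, finrank_span_singleton hX₂ne])
  have hbkx₁X₂ : A.bk x₁ X₂ = 0 := by
    have hj := A.jac011 hx₁g hy₁g hy₁g
    rw [← hX₂def, hbkx₁y₁, map_zero, add_zero] at hj
    exact hj
  -- X₃ := [X₀, X₂]
  set X₃ := A.bk X₀ X₂ with hX₃def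
  have hX₃W : X₃ ∈ W 0 3 := by
    have := hWbk 0 0 1 2 X₀ hX₀W X₂ hX₂W; rwa [p00] at this
  have hX₃g : X₃ ∈ A.g 0 := hW03g hX₃W
  have hW03le : W 0 3 ≤ Submodule.span ℂ {X₃} := by
    rw [hBW03]
    refine A.Bspan_le ?_
    intro x hx y hy
    rw [hW01span, Submodule.mem_span_pair] at hx
    obtain ⟨a, b, rfl⟩ := hx
    rw [← hspanX₂, Submodule.mem_span_singleton] at hy
    obtain ⟨c, rfl⟩ := hy
    have hcalc : A.bk (a • X₀ + b • x₁) (c • X₂) = (a * c) • X₃ := by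
      simp only [hX₃def, map_add, map_smul, LinearMap.add_apply,
        LinearMap.smul_apply, hbkx₁X₂, smul_zero, add_zero]
      module
    rw [hcalc]
    exact Submodule.smul_mem _ _ (Submodule.mem_span_singleton_self _)
  have hX₃ne : X₃ ≠ 0 := by
    intro h
    apply frW03ne
    refine le_bot_iff.1 (hW03le.trans ?_)
    rw [h, Submodule.span_zero_singleton]
  have hspanX₃ : Submodule.span ℂ {X₃} = W 0 3 :=
    le_antisymm ((Submodule.span_singleton_le_iff_mem _ _).2 hX₃W) hW03le
  have hbky₁y₂ : A.bk y₁ y₂ = (1/2 : ℂ) • X₃ := by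
    have hj := A.jac011 hX₀g hy₁g hy₁g
    rw [← hX₂def, ← hX₃def, hbkX₀y₁] at hj
    linear_combination (norm := module) (-(1:ℂ)/2) • hj
  -- μ and X₁
  have hbkX₀x₁W : A.bk X₀ x₁ ∈ W 0 2 := by
    have := hWbk 0 0 1 1 X₀ hX₀W x₁ hx₁W; rwa [p00] at this
  have hW02le : W 0 2 ≤ Submodule.span ℂ {A.bk X₀ x₁} := by
    rw [hBW02]
    refine A.Bspan_le ?_
    intro x hx y hy
    rw [hW01span, Submodule.mem_span_pair] at hx hy
    obtain ⟨a, b, rfl⟩ := hx; obtain ⟨c, e, rfl⟩ := hy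
    have h0 : A.bk X₀ X₀ = 0 := A.bk_self_even hX₀g
    have h1 : A.bk x₁ x₁ = 0 := A.bk_self_even hx₁g
    have h2 : A.bk x₁ X₀ = - A.bk X₀ x₁ := A.bk_skew_ee hX₀g hx₁g
    have hcalc : A.bk (a • X₀ + b • x₁) (c • X₀ + e • x₁)
        = (a * e - b * c) • A.bk X₀ x₁ := by
      simp only [map_add, map_smul, LinearMap.add_apply, LinearMap.smul_apply,
        h0, h1, h2, smul_zero, smul_neg, add_zero, zero_add]
      module
    rw [hcalc]
    exact Submodule.smul_mem _ _ (Submodule.mem_span_singleton_self _)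
  have hbkX₀x₁ne : A.bk X₀ x₁ ≠ 0 := by
    intro h
    apply frW02ne
    refine le_bot_iff.1 (hW02le.trans ?_)
    rw [h, Submodule.span_zero_singleton]
  obtain ⟨μ, hμ⟩ : ∃ μ : ℂ, μ • X₂ = A.bk X₀ x₁ := by
    rw [← Submodule.mem_span_singleton, hspanX₂]; exact hbkX₀x₁W
  have hμne : μ ≠ 0 := by rintro rfl; rw [zero_smul] at hμ; exact hbkX₀x₁ne hμ.symm
  set X₁ := μ⁻¹ • x₁ with hX₁def
  have hX₁W : X₁ ∈ W 0 1 := Submodule.smul_mem _ _ hx₁W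
  have hX₁g : X₁ ∈ A.g 0 := hW01g hX₁W
  have hbkX₀X₁ : A.bk X₀ X₁ = X₂ := by
    rw [hX₁def, map_smul, ← hμ, smul_smul, inv_mul_cancel₀ hμne, one_smul]
  have hbkX₁y₁ : A.bk X₁ y₁ = 0 := by
    rw [hX₁def, map_smul, LinearMap.smul_apply, hbkx₁y₁, smul_zero]
  have hbkX₁X₂ : A.bk X₁ X₂ = 0 := by
    rw [hX₁def, map_smul, LinearMap.smul_apply, hbkx₁X₂, smul_zero]
  have hbkx₁y₂ : A.bk x₁ y₂ = 0 := by
    have hj := A.jac001 hX₀g hx₁g hy₁g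
    rw [hbkx₁y₁, map_zero, hbkX₀y₁, ← hμ, map_smul, LinearMap.smul_apply,
      hbkX₂y₁, smul_zero] at hj
    linear_combination (norm := module) hj
  have hbkX₁y₂ : A.bk X₁ y₂ = 0 := by
    rw [hX₁def, map_smul, LinearMap.smul_apply, hbkx₁y₂, smul_zero]
  -- Y₃ := [X₀, y₂]
  set Y₃ := A.bk X₀ y₂ with hY₃def
  have hY₃W : Y₃ ∈ W 1 3 := by
    have := hWbk 0 1 1 2 X₀ hX₀W y₂ hy₂W; rwa [p01] at this
  have hY₃g : Y₃ ∈ A.g 1 := hW13g hY₃W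
  have hW13le : W 1 3 ≤ Submodule.span ℂ {Y₃} := by
    rw [hBW13]
    refine A.Bspan_le ?_
    intro x hx y hy
    rw [hW01span, Submodule.mem_span_pair] at hx
    obtain ⟨a, b, rfl⟩ := hx
    rw [← hy₂span, Submodule.mem_span_singleton] at hy
    obtain ⟨c, rfl⟩ := hy
    have hcalc : A.bk (a • X₀ + b • x₁) (c • y₂) = (a * c) • Y₃ := by
      simp only [hY₃def, map_add, map_smul, LinearMap.add_apply,
        LinearMap.smul_apply, hbkx₁y₂, smul_zero, add_zero]
      module
    rw [hcalc]
    exact Submodule.smul_mem _ _ (Submodule.mem_span_singleton_self _)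
  have hspanY₃ : Submodule.span ℂ {Y₃} = W 1 3 :=
    le_antisymm ((Submodule.span_singleton_le_iff_mem _ _).2 hY₃W) hW13le
  -- remaining zero brackets
  have z03 : A.bk X₀ X₃ = 0 := zb0 0 0 1 3 _ _ p00 (by norm_num) hX₀W hX₃W
  have z13 : A.bk X₁ X₃ = 0 := zb0 0 0 1 3 _ _ p00 (by norm_num) hX₁W hX₃W
  have z23 : A.bk X₂ X₃ = 0 := zb0 0 0 2 3 _ _ p00 (by norm_num) hX₂W hX₃W
  have zX₂y₂ : A.bk X₂ y₂ = 0 := zb1 0 1 2 2 _ _ p01 (by omega) hX₂W hy₂W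
  have zX₂Y₃ : A.bk X₂ Y₃ = 0 := zb1 0 1 2 3 _ _ p01 (by omega) hX₂W hY₃W
  have zX₃y₁ : A.bk X₃ y₁ = 0 := zb1 0 1 3 1 _ _ p01 (by omega) hX₃W hy₁W
  have zX₃y₂ : A.bk X₃ y₂ = 0 := zb1 0 1 3 2 _ _ p01 (by omega) hX₃W hy₂W
  have zX₃Y₃ : A.bk X₃ Y₃ = 0 := zb1 0 1 3 3 _ _ p01 (by omega) hX₃W hY₃W
  have zX₀Y₃ : A.bk X₀ Y₃ = 0 := zb1 0 1 1 3 _ _ p01 (by omega) hX₀W hY₃W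
  have zX₁Y₃ : A.bk X₁ Y₃ = 0 := zb1 0 1 1 3 _ _ p01 (by omega) hX₁W hY₃W
  have zy₁Y₃ : A.bk y₁ Y₃ = 0 := zb0 1 1 1 3 _ _ p11 (by norm_num) hy₁W hY₃W
  have zy₂y₂ : A.bk y₂ y₂ = 0 := zb0 1 1 2 2 _ _ p11 (by norm_num) hy₂W hy₂W
  have zy₂Y₃ : A.bk y₂ Y₃ = 0 := zb0 1 1 2 3 _ _ p11 (by norm_num) hy₂W hY₃W
  have zY₃Y₃ : A.bk Y₃ Y₃ = 0 := zb0 1 1 3 3 _ _ p11 (by norm_num) hY₃W hY₃W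
  have zy₂y₁ : A.bk y₂ y₁ = (1/2:ℂ) • X₃ := by
    rw [A.bk_symm_oo hy₁g hy₂g]; exact hbky₁y₂
  have zY₃y₁ : A.bk Y₃ y₁ = 0 := by rw [A.bk_symm_oo hy₁g hY₃g]; exact zy₁Y₃
  have zY₃y₂ : A.bk Y₃ y₂ = 0 := by rw [A.bk_symm_oo hy₂g hY₃g]; exact zy₂Y₃
  have z10 : A.bk X₁ X₀ = - X₂ := by rw [A.bk_skew_ee hX₀g hX₁g, hbkX₀X₁]
  have z20 : A.bk X₂ X₀ = - X₃ := by rw [A.bk_skew_ee hX₀g hX₂g, ← hX₃def]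
  have z21 : A.bk X₂ X₁ = 0 := by rw [A.bk_skew_ee hX₁g hX₂g, hbkX₁X₂, neg_zero]
  have z30 : A.bk X₃ X₀ = 0 := by rw [A.bk_skew_ee hX₀g hX₃g, z03, neg_zero]
  have z31 : A.bk X₃ X₁ = 0 := by rw [A.bk_skew_ee hX₁g hX₃g, z13, neg_zero]
  have z32 : A.bk X₃ X₂ = 0 := by rw [A.bk_skew_ee hX₂g hX₃g, z23, neg_zero]
  have z00 : A.bk X₀ X₀ = 0 := A.bk_self_even hX₀g
  have z11' : A.bk X₁ X₁ = 0 := A.bk_self_even hX₁g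
  have z22' : A.bk X₂ X₂ = 0 := A.bk_self_even hX₂g
  have z33' : A.bk X₃ X₃ = 0 := A.bk_self_even hX₃g
  have z02 : A.bk X₀ X₂ = X₃ := hX₃def.symm
  have z12 : A.bk X₁ X₂ = 0 := hbkX₁X₂
  have zX₀y₂ : A.bk X₀ y₂ = Y₃ := hY₃def.symm
  have zy₁y₁ : A.bk y₁ y₁ = X₂ := hX₂def.symm
  -- the adapted basis
  set Xf : ℕ → V := fun n =>
    if n = 0 then X₀ else if n = 1 then X₁ else if n = 2 then X₂ else
      if n = 3 then X₃ else 0 with hXf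
  set Yf : ℕ → V := fun n =>
    if n = 1 then y₁ else if n = 2 then y₂ else if n = 3 then Y₃ else 0 with hYf
  have hfrV : Module.finrank ℂ V = 4 + m := by
    have h := Submodule.finrank_add_eq_of_isCompl A.compl
    omega
  have htop : ⊤ ≤ Submodule.span ℂ (Set.range
      (Sum.elim (fun i : Fin (3+1) => Xf i.val) (fun j : Fin m => Yf (j.val + 1)))) := by
    rw [← codisjoint_iff.1 A.compl.codisjoint]
    refine sup_le ?_ ?_
    · rw [hG0]
      refine sup_le ?_ (sup_le ?_ ?_)
      · rw [hW01span, Submodule.span_le]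
        rintro z hz
        simp only [Set.mem_insert_iff, Set.mem_singleton_iff] at hz
        rcases hz with hz | hz <;> rw [hz]
        · exact Submodule.subset_span ⟨Sum.inl ⟨0, by norm_num⟩, rfl⟩
        · have hx₁eq : x₁ = μ • X₁ := by
            rw [hX₁def, smul_smul, mul_inv_cancel₀ hμne, one_smul]
          rw [hx₁eq]
          exact Submodule.smul_mem _ _
            (Submodule.subset_span ⟨Sum.inl ⟨1, by norm_num⟩, rfl⟩)
      · rw [← hspanX₂]
        refine (Submodule.span_singleton_le_iff_mem _ _).2
          (Submodule.subset_span ⟨Sum.inl ⟨2, by norm_num⟩, rfl⟩)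
      · rw [← hspanX₃]
        refine (Submodule.span_singleton_le_iff_mem _ _).2
          (Submodule.subset_span ⟨Sum.inl ⟨3, by norm_num⟩, rfl⟩)
    · rw [hG1]
      refine sup_le ?_ (sup_le ?_ ?_)
      · rw [← hy₁span]
        refine (Submodule.span_singleton_le_iff_mem _ _).2
          (Submodule.subset_span ⟨Sum.inr ⟨0, by omega⟩, rfl⟩)
      · rw [← hy₂span]
        refine (Submodule.span_singleton_le_iff_mem _ _).2
          (Submodule.subset_span ⟨Sum.inr ⟨1, by omega⟩, rfl⟩)
      · rw [← hspanY₃]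
        refine (Submodule.span_singleton_le_iff_mem _ _).2 ?_
        rcases hm with rfl | rfl
        · have hY₃0 : Y₃ = 0 := by
            have h := hY₃W
            rw [hW1bot 3 (by norm_num)] at h
            simpa using h
          rw [hY₃0]; exact Submodule.zero_mem _
        · exact Submodule.subset_span ⟨Sum.inr ⟨2, by norm_num⟩, rfl⟩
  have hliB : LinearIndependent ℂ
      (Sum.elim (fun i : Fin (3+1) => Xf i.val) (fun j : Fin m => Yf (j.val + 1))) :=
    linearIndependent_of_top_le_span_of_card_eq_finrank htop (by simp [hfrV])
  have hXmem : ∀ i, i ≤ 3 → Xf i ∈ A.g 0 := by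
    intro i hi
    interval_cases i <;> simp only [hXf] <;> norm_num <;>
      first | exact hX₀g | exact hX₁g | exact hX₂g | exact hX₃g
  have hYmem : ∀ j, 1 ≤ j → j ≤ m → Yf j ∈ A.g 1 := by
    intro j hj1 hjm
    have hj3 : j ≤ 3 := le_trans hjm hm3
    interval_cases j <;> simp only [hYf] <;> norm_num <;>
      first | exact hy₁g | exact hy₂g | exact hY₃g
  have hXX : ∀ i j : ℕ, i ≤ 3 → j ≤ 3 → A.bk (Xf i) (Xf j) =
      if i = 0 ∧ 1 ≤ j ∧ j ≤ 2 then Xf (j + 1)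
      else if j = 0 ∧ 1 ≤ i ∧ i ≤ 2 then -Xf (i + 1) else 0 := by
    intro i j hi hj
    interval_cases i <;> interval_cases j <;> simp only [hXf] <;> norm_num <;>
      first
        | exact z00 | exact hbkX₀X₁ | exact z02 | exact z03
        | exact z10 | exact z11' | exact z12 | exact z13
        | exact z20 | exact z21 | exact z22' | exact z23
        | exact z30 | exact z31 | exact z32 | exact z33'
  refine ⟨Xf, Yf, ⟨hXmem, hYmem, hliB, le_antisymm le_top htop⟩, hXX, ?_, ?_⟩
  · -- XY law
    intro i j hi hj1 hjm
    rcases hm with rfl | rfl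
    · have hY₃0 : Y₃ = 0 := by
        have h := hY₃W
        rw [hW1bot 3 (by norm_num)] at h
        simpa using h
      have zX₀y₂0 : A.bk X₀ y₂ = 0 := zX₀y₂.trans hY₃0
      interval_cases i <;> interval_cases j <;> simp only [hXf, hYf] <;> norm_num <;>
        first
          | exact hbkX₀y₁ | exact zX₀y₂0 | exact hbkX₁y₁ | exact hbkX₁y₂
          | exact hbkX₂y₁ | exact zX₂y₂ | exact zX₃y₁ | exact zX₃y₂
    · interval_cases i <;> interval_cases j <;> simp only [hXf, hYf] <;> norm_num <;>
        first
          | exact hbkX₀y₁ | exact zX₀y₂ | exact zX₀Y₃ | exact hbkX₁y₁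
          | exact hbkX₁y₂ | exact zX₁Y₃ | exact hbkX₂y₁ | exact zX₂y₂
          | exact zX₂Y₃ | exact zX₃y₁ | exact zX₃y₂ | exact zX₃Y₃
  · -- YY law
    intro i j hi1 him hj1 hjm
    rcases hm with rfl | rfl <;>
      interval_cases i <;> interval_cases j <;> simp only [hXf, hYf] <;> norm_num <;>
        first
          | exact zy₁y₁ | exact hbky₁y₂ | exact zy₁Y₃ | exact zy₂y₁
          | exact zy₂y₂ | exact zy₂Y₃ | exact zY₃y₁ | exact zY₃y₂ | exact zY₃Y₃


/-- Every non-degenerate naturally graded filiform Lie superalgebra with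
`dim g₀ = 4` and `dim g₁ = m` as indicated is isomorphic to exactly one of the
two non-isomorphic superalgebras `L^{3,m} + φ₁₂` and `L^{3,m} + φ₁₂ + Ψ²₁₁`. -/
theorem stmt1 {V : Type*} [AddCommGroup V] [Module ℂ V] [FiniteDimensional ℂ V] (A : LieSuperAlg V) (m : ℕ)
    (hm : m = 2 ∨ m = 3)
    (hfil : A.IsFiliform 3 m) (hnd : A.NonDegenerate) (hng : A.NaturallyGraded) :
    (Law3mI A m ∨ Law3mII A m) ∧ ¬(Law3mI A m ∧ Law3mII A m) := by
  have hm2 : 2 ≤ m := by rcases hm with rfl | rfl <;> norm_num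
  exact ⟨Or.inl (main A m hm hfil hnd hng), fun h => notII A m hm2 h.2⟩
end
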